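/- Completeness can fail under multifold connectivity: there exists an acyclic QBAF and arguments A, D with more than one path from D to A such that σ'_D(A) − σ(A) ≠ −τ(D) · ∇|_{D→A}. Concretely, in the QBAF with arguments {A,B,C,D}, supports (B,A), (C,A), (D,B), (D,C), and all base scores 0.5, one has σ(A) = 0.96875, ∇|_{D→A} = 0.125, σ'_D(A) = 0.875, so σ'_D(A) − σ(A) = −0.09375 ≠ −0.0625 = −τ(D)·∇|_{D→A}. -/

import Mathlib

open scoped BigOperators
attribute [local instance] Classical.propDecidable

/-- The DF-QuAD combination function: given base score `t`, aggregated attacker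
strength `va` and aggregated supporter strength `vs`, return the strength. -/
noncomputable def dfquad (t va vs : ℝ) : ℝ :=
  if vs ≤ va then t - t * (va - vs) else t + (1 - t) * (vs - va)

/-- A (finite, acyclic) quantitative bipolar argumentation framework. -/
structure QBAF (V : Type) [Fintype V] where
  att : V → V → Prop
  sup : V → V → Prop
  disjoint : ∀ x y, ¬ (att x y ∧ sup x y)
  acyclic : WellFounded (fun x y => att x y ∨ sup x y)

namespace QBAF

variable {V : Type} [Fintype V]

/-- Aggregated attacker strength `v_Aa = 1 - ∏ (1 - σ X)` over attackers `X` of `A`. -/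
noncomputable def vatt (Q : QBAF V) (σ : V → ℝ) (A : V) : ℝ :=
  1 - ∏ x ∈ Finset.univ.filter (fun x => Q.att x A), (1 - σ x)

/-- Aggregated supporter strength `v_As = 1 - ∏ (1 - σ X)` over supporters `X` of `A`. -/
noncomputable def vsup (Q : QBAF V) (σ : V → ℝ) (A : V) : ℝ :=
  1 - ∏ x ∈ Finset.univ.filter (fun x => Q.sup x A), (1 - σ x)

/-- `σ` is the DF-QuAD strength function for base scores `τ`. -/
def IsStrength (Q : QBAF V) (τ σ : V → ℝ) : Prop :=
  ∀ A, σ A = dfquad (τ A) (Q.vatt σ A) (Q.vsup σ A)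

/-- The edge relation of the QBAF graph. -/
def edge (Q : QBAF V) (x y : V) : Prop := Q.att x y ∨ Q.sup x y

/-- `l` is a (directed) path from `B` to `A` in the QBAF graph. -/
def IsPathFrom (Q : QBAF V) (B A : V) (l : List V) : Prop :=
  2 ≤ l.length ∧ l.Chain' Q.edge ∧ l.head? = some B ∧ l.getLast? = some A

end QBAF

/-- The argument attribution explanation (AAE) `∇|_{B ↦ A}`: the derivative of the
strength of `A` with respect to the base score of `B`, where `σf τ'` denotes the
DF-QuAD strength function for base scores `τ'`. -/
noncomputable def AAE {V : Type} [Fintype V] (Q : QBAF V)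
    (σf : (V → ℝ) → V → ℝ) (τ : V → ℝ) (B A : V) : ℝ :=
  deriv (fun δ => σf (Function.update τ B δ) A) (τ B)

/-!
When the base scores of `A`, `B`, `C` are `1/2`, the strength of `B` and of `C` is
`(1 + τ(D))/2`, and each contributes the factor `(1 - τ(D))/2` to the product aggregating the
supporters of `A`, so `σ(A) = 1 - (1 - τ(D))^2/8`. Because `D` reaches `A` along two paths,
`σ(A)` is quadratic rather than affine in `τ(D)`, and the linear prediction `-τ(D) · ∇` of the
effect of removing `D` (that is, `τ(D) = 0`) misses the actual change.
-/

namespace QBAF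

variable {V : Type} [Fintype V] (Q : QBAF V)

lemma vatt_congr {σ σ' : V → ℝ} {A : V} (h : ∀ x, Q.att x A → σ x = σ' x) :
    Q.vatt σ A = Q.vatt σ' A := by
  unfold vatt
  exact congrArg _ (Finset.prod_congr rfl fun x hx => by rw [h x (Finset.mem_filter.1 hx).2])

lemma vsup_congr {σ σ' : V → ℝ} {A : V} (h : ∀ x, Q.sup x A → σ x = σ' x) :
    Q.vsup σ A = Q.vsup σ' A := by
  unfold vsup
  exact congrArg _ (Finset.prod_congr rfl fun x hx => by rw [h x (Finset.mem_filter.1 hx).2])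

lemma vatt_eq_zero {A : V} (h : ∀ x, ¬ Q.att x A) (σ : V → ℝ) : Q.vatt σ A = 0 := by
  simp [vatt, h]

lemma vsup_eq_of_supporters {A : V} (s : Finset V) (h : ∀ x, Q.sup x A ↔ x ∈ s) (σ : V → ℝ) :
    Q.vsup σ A = 1 - ∏ x ∈ s, (1 - σ x) := by
  rw [vsup, Finset.filter_congr fun x _ => h x, Finset.filter_mem_eq_inter, Finset.univ_inter]

/-- The value `0` at non-predecessors of `A` is a placeholder that the aggregates never read. -/
noncomputable def strength (τ : V → ℝ) : V → ℝ :=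
  Q.acyclic.fix fun A σ =>
    dfquad (τ A) (Q.vatt (fun x => if h : Q.att x A then σ x (Or.inl h) else 0) A)
      (Q.vsup (fun x => if h : Q.sup x A then σ x (Or.inr h) else 0) A)

lemma isStrength_strength (τ : V → ℝ) : Q.IsStrength τ (Q.strength τ) := by
  intro A
  rw [strength, WellFounded.fix_eq]
  congr 1
  · exact Q.vatt_congr fun x h => dif_pos h
  · exact Q.vsup_congr fun x h => dif_pos h

end QBAF

lemma AAE_eq_of_hasDerivAt {V : Type} [Fintype V] [DecidableEq V] {Q : QBAF V}
    {σf : (V → ℝ) → V → ℝ} {τ : V → ℝ} {B A : V} {d : ℝ}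
    (h : HasDerivAt (fun δ => σf (Function.update τ B δ) A) d (τ B)) : AAE Q σf τ B A = d := by
  -- `AAE` updates `τ` through the classical `DecidableEq` instance
  rw [AAE, Subsingleton.elim (fun a b => Classical.propDecidable (a = b)) ‹DecidableEq V›]
  exact h.deriv

lemma dfquad_zero_zero (t : ℝ) : dfquad t 0 0 = t := by
  simp [dfquad]

lemma dfquad_half (va vs : ℝ) : dfquad (1 / 2) va vs = 1 / 2 + (vs - va) / 2 := by
  unfold dfquad
  split <;> ring

/-- The arguments `A, B, C, D` are `0, 1, 2, 3`. -/
def diamond : QBAF (Fin 4) where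
  att _ _ := False
  sup x y := (x, y) ∈ ({(1,0), (2,0), (3,1), (3,2)} : Set (Fin 4 × Fin 4))
  disjoint _ _ h := h.1
  acyclic := Subrelation.wf
    (by rintro x y (h | h); exacts [h.elim, by fin_cases x <;> fin_cases y <;> simp_all])
    (wellFounded_gt (α := Fin 4))

lemma diamond_strength_zero {τ σ : Fin 4 → ℝ} (hσ : diamond.IsStrength τ σ)
    (h0 : τ 0 = 1 / 2) (h1 : τ 1 = 1 / 2) (h2 : τ 2 = 1 / 2) :
    σ 0 = 1 - (1 - τ 3) ^ 2 / 8 := by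
  have no_att : ∀ A x, ¬ diamond.att x A := fun _ _ h => h
  have supporters (A : Fin 4) (s : Finset (Fin 4)) (hs : ∀ x, (x, A) ∈
      ({(1,0), (2,0), (3,1), (3,2)} : Set (Fin 4 × Fin 4)) ↔ x ∈ s) :
      σ A = dfquad (τ A) 0 (1 - ∏ x ∈ s, (1 - σ x)) := by
    rw [hσ A, diamond.vatt_eq_zero (no_att A), diamond.vsup_eq_of_supporters s hs]
  have hD : σ 3 = τ 3 := by
    rw [supporters 3 ∅ (by decide), Finset.prod_empty, sub_self, dfquad_zero_zero]
  have hB : σ 1 = (1 + τ 3) / 2 := by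
    rw [supporters 1 {3} (by decide), Finset.prod_singleton, hD, h1, dfquad_half]; ring
  have hC : σ 2 = (1 + τ 3) / 2 := by
    rw [supporters 2 {3} (by decide), Finset.prod_singleton, hD, h2, dfquad_half]; ring
  rw [supporters 0 {1, 2} (by decide), Finset.prod_pair (by decide), hB, hC, h0, dfquad_half]
  ring

lemma diamond_strength_update_zero (δ : ℝ) :
    diamond.strength (Function.update (fun _ => 1 / 2) 3 δ) 0 = 1 - (1 - δ) ^ 2 / 8 := by
  rw [diamond_strength_zero (diamond.isStrength_strength _)] <;> simp

lemma diamond_isPathFrom (B : Fin 4) (hB : B = 1 ∨ B = 2) : diamond.IsPathFrom 3 0 [3, B, 0] := by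
  refine ⟨by simp, ?_, rfl, rfl⟩
  have edge_sup {x y : Fin 4} (h : diamond.sup x y) : diamond.edge x y := Or.inr h
  rcases hB with rfl | rfl <;>
    exact .cons_cons (edge_sup (by simp [diamond])) (.cons_cons (edge_sup (by simp [diamond]))
      (List.isChain_singleton _))

lemma hasDerivAt_diamond_strength_update_zero (δ : ℝ) :
    HasDerivAt (fun t => diamond.strength (Function.update (fun _ => 1 / 2) 3 t) 0)
      ((1 - δ) / 4) δ := by
  rw [funext diamond_strength_update_zero]
  exact (((hasDerivAt_id' δ).const_sub 1).fun_pow 2 |>.div_const 8).const_sub 1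
    |>.congr_deriv (by ring)

/-- completeness can fail under multifold connectivity. In the QBAF with
arguments `A = 0, B = 1, C = 2, D = 3`, supports `(B,A), (C,A), (D,B), (D,C)`, no
attacks, and all base scores `0.5`, there is more than one path from `D` to `A`, and
`σ(A) = 0.96875`, `∇|_{D ↦ A} = 0.125`, `σ'_D(A) = 0.875`, so
`σ'_D(A) - σ(A) = -0.09375 ≠ -0.0625 = -τ(D) · ∇|_{D ↦ A}`. -/
theorem completeness_can_fail :
    ∃ (Q : QBAF (Fin 4)) (σf : (Fin 4 → ℝ) → Fin 4 → ℝ) (τ : Fin 4 → ℝ),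
      (∀ τ', Q.IsStrength τ' (σf τ')) ∧
      (∀ x y, ¬ Q.att x y) ∧
      (∀ x y, Q.sup x y ↔ (x, y) ∈ ({(1,0), (2,0), (3,1), (3,2)} : Set (Fin 4 × Fin 4))) ∧
      (∀ x, τ x = 0.5) ∧
      (∃ l₁ l₂, Q.IsPathFrom 3 0 l₁ ∧ Q.IsPathFrom 3 0 l₂ ∧ l₁ ≠ l₂) ∧
      σf τ 0 = 0.96875 ∧
      AAE Q σf τ 3 0 = 0.125 ∧
      σf (Function.update τ 3 0) 0 = 0.875 ∧
      σf (Function.update τ 3 0) 0 - σf τ 0 = -0.09375 ∧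
      σf (Function.update τ 3 0) 0 - σf τ 0 ≠ -(τ 3) * AAE Q σf τ 3 0 := by
  have hτ : Function.update (fun _ : Fin 4 => (1 / 2 : ℝ)) 3 (1 / 2) = fun _ => 1 / 2 :=
    Function.update_eq_self_iff.2 rfl
  have hσ : diamond.strength (fun _ => 1 / 2) 0 = 0.96875 := by
    rw [← hτ, diamond_strength_update_zero]; norm_num
  have hσ' : diamond.strength (Function.update (fun _ => 1 / 2) 3 0) 0 = 0.875 := by
    rw [diamond_strength_update_zero]; norm_num
  have hAAE : AAE diamond diamond.strength (fun _ => 1 / 2) 3 0 = 0.125 := by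
    rw [AAE_eq_of_hasDerivAt (hasDerivAt_diamond_strength_update_zero _)]
    norm_num
  refine ⟨diamond, diamond.strength, fun _ => 1 / 2, diamond.isStrength_strength,
    fun _ _ h => h, fun _ _ => Iff.rfl, fun _ => by norm_num,
    ⟨_, _, diamond_isPathFrom 1 (.inl rfl), diamond_isPathFrom 2 (.inr rfl), by simp⟩,
    hσ, hAAE, hσ', by rw [hσ, hσ']; norm_num, by rw [hσ, hσ', hAAE]; norm_num⟩
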